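/- arXiv:2201.09507 — 2 statements merged into one kernel-verified Lean document; each statement's English description precedes it below -/
import Mathlib

section
/- Suppose (R̂₁, R̂') is an optimal solution to the rank-relaxed problem, i.e., it is feasible and b^H(R̂₁+R̂')b ≥ b^H(R₁+R')b for every feasible pair (R₁, R'). Then the pair (R̂₁+R̂', 0) is also feasible for the rank-relaxed problem and attains the same objective value b^H(R̂₁+R̂')b; hence it is also an optimal solution. (Lemma 1 of the paper.) -/
open Matrix Finset ComplexOrder

/-- The (real-valued) quadratic form `vᴴ R v` for a complex matrix `R`. -/
noncomputable def quadForm {M : ℕ} (R : Matrix (Fin M) (Fin M) ℂ) (v : Fin M → ℂ) : ℝ :=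
  (star v ⬝ᵥ (R *ᵥ v)).re

/-- Feasibility for the rank-relaxed problem: `R₁, R'` Hermitian PSD,
`hᴴ R₁ h ≥ σ²γ̄` and `tr(R₁ + R') ≤ P_t`. -/
def FeasibleRelaxed {M : ℕ} (Pt σ γ : ℝ) (h : Fin M → ℂ)
    (R₁ R' : Matrix (Fin M) (Fin M) ℂ) : Prop :=
  R₁.PosSemidef ∧ R'.PosSemidef ∧ σ ^ 2 * γ ≤ quadForm R₁ h ∧ ((R₁ + R').trace).re ≤ Pt

theorem quadForm_add {M : ℕ} (A B : Matrix (Fin M) (Fin M) ℂ) (v : Fin M → ℂ) :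
    quadForm (A + B) v = quadForm A v + quadForm B v := by
  simp only [quadForm, add_mulVec, dotProduct_add, Complex.add_re]

theorem Matrix.PosSemidef.quadForm_nonneg {M : ℕ} {R : Matrix (Fin M) (Fin M) ℂ}
    (hR : R.PosSemidef) (v : Fin M → ℂ) : 0 ≤ quadForm R v := by
  simpa [quadForm, Complex.zero_le_real] using (hR.dotProduct_mulVec_nonneg v).1

theorem FeasibleRelaxed.add_zero {M : ℕ} {Pt σ γ : ℝ} {h : Fin M → ℂ}
    {R₁ R' : Matrix (Fin M) (Fin M) ℂ} (hf : FeasibleRelaxed Pt σ γ h R₁ R') :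
    FeasibleRelaxed Pt σ γ h (R₁ + R') 0 := by
  obtain ⟨hR₁, hR', hsnr, hpow⟩ := hf
  refine ⟨hR₁.add hR', PosSemidef.zero, ?_, by simpa using hpow⟩
  rw [quadForm_add]
  linarith [hR'.quadForm_nonneg h]

theorem stmt_0_general {M : ℕ} (h b : Fin M → ℂ)
    (Pt σ γ : ℝ)
    (Rhat1 Rhat' : Matrix (Fin M) (Fin M) ℂ)
    (hfeas : FeasibleRelaxed Pt σ γ h Rhat1 Rhat')
    (hopt : ∀ R₁ R', FeasibleRelaxed Pt σ γ h R₁ R' →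
      quadForm (R₁ + R') b ≤ quadForm (Rhat1 + Rhat') b) :
    FeasibleRelaxed Pt σ γ h (Rhat1 + Rhat') 0 ∧
    quadForm ((Rhat1 + Rhat') + 0) b = quadForm (Rhat1 + Rhat') b ∧
    ∀ R₁ R', FeasibleRelaxed Pt σ γ h R₁ R' →
      quadForm (R₁ + R') b ≤ quadForm ((Rhat1 + Rhat') + 0) b := by
  rw [add_zero]
  exact ⟨hfeas.add_zero, rfl, hopt⟩

/-- Lemma 1: If `(R̂₁, R̂')` is optimal for the rank-relaxed problem, then
`(R̂₁ + R̂', 0)` is feasible, attains the same objective value, and is also optimal. -/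
theorem stmt_0 {M : ℕ} (hM : 1 ≤ M) (h b : Fin M → ℂ) (hh : h ≠ 0) (hb : b ≠ 0)
    (Pt σ γ : ℝ) (hPt : 0 < Pt) (hσ : 0 < σ) (hγ : 0 ≤ γ)
    (Rhat1 Rhat' : Matrix (Fin M) (Fin M) ℂ)
    (hfeas : FeasibleRelaxed Pt σ γ h Rhat1 Rhat')
    (hopt : ∀ R₁ R', FeasibleRelaxed Pt σ γ h R₁ R' →
      quadForm (R₁ + R') b ≤ quadForm (Rhat1 + Rhat') b) :
    FeasibleRelaxed Pt σ γ h (Rhat1 + Rhat') 0 ∧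
    quadForm ((Rhat1 + Rhat') + 0) b = quadForm (Rhat1 + Rhat') b ∧
    ∀ R₁ R', FeasibleRelaxed Pt σ γ h R₁ R' →
      quadForm (R₁ + R') b ≤ quadForm ((Rhat1 + Rhat') + 0) b :=
  stmt_0_general h b Pt σ γ Rhat1 Rhat' hfeas hopt
end

section
/- Assume σ²γ̄ ≤ P_t·|h^H b|²/‖b‖². Let w̄ = √P_t · b/‖b‖ and R̄₁ = w̄ w̄^H. Then (R̄₁, 0) is feasible for problem (22) (in particular h^H R̄₁ h ≥ σ²γ̄, tr(R̄₁) = P_t, rank(R̄₁) ≤ 1), its objective value is b^H R̄₁ b = P_t‖b‖², and every feasible pair (R₁, R') of problem (22) satisfies b^H(R₁+R')b ≤ P_t‖b‖². Hence (R̄₁, 0) is an optimal solution to problem (22). (Theorem 1, first case.) -/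
/-!
A positive semidefinite matrix is a sum of rank-one matrices `u uᴴ`, and for each of them
Cauchy–Schwarz gives `vᴴ (u uᴴ) v = |vᴴ u|² ≤ ‖u‖² ‖v‖² = tr(u uᴴ) ‖v‖²`. Hence
`bᴴ (R₁ + R') b ≤ tr(R₁ + R') ‖b‖² ≤ P_t ‖b‖²` for every feasible pair, and the beamformer
`w̄` aligned with `b` attains this bound; the case assumption is exactly the constraint
`hᴴ R̄₁ h ≥ σ²γ̄` for it.
-/

open Matrix Finset ComplexOrder

/-- Squared Euclidean norm of a complex vector. -/
noncomputable def normSqV {M : ℕ} (v : Fin M → ℂ) : ℝ :=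
  ∑ i, Complex.normSq (v i)

/-- Euclidean norm of a complex vector. -/
noncomputable def normV {M : ℕ} (v : Fin M → ℂ) : ℝ :=
  Real.sqrt (normSqV v)

/-- Feasibility for problem (22): `R₁, R'` Hermitian PSD, `hᴴ R₁ h ≥ σ²γ̄`,
`tr(R₁ + R') ≤ P_t`, `rank R₁ ≤ 1` and `rank R' ≤ M - 1`. -/
def Feasible22 {M : ℕ} (Pt σ γ : ℝ) (h : Fin M → ℂ)
    (R₁ R' : Matrix (Fin M) (Fin M) ℂ) : Prop :=
  R₁.PosSemidef ∧ R'.PosSemidef ∧ σ ^ 2 * γ ≤ quadForm R₁ h ∧ ((R₁ + R').trace).re ≤ Pt ∧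
    R₁.rank ≤ 1 ∧ R'.rank ≤ M - 1

section

variable {M : ℕ}

lemma dotProduct_star_self_eq_normSqV (v : Fin M → ℂ) : star v ⬝ᵥ v = normSqV v := by
  simp [normSqV, dotProduct, Complex.normSq_eq_conj_mul_self]

lemma normSqV_eq_norm_sq (v : Fin M → ℂ) : normSqV v = ‖WithLp.toLp 2 v‖ ^ 2 := by
  simp [normSqV, EuclideanSpace.norm_sq_eq, Complex.sq_norm]

lemma normSqV_pos {v : Fin M → ℂ} (hv : v ≠ 0) : 0 < normSqV v := by
  rw [normSqV_eq_norm_sq]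
  have hv' : WithLp.toLp 2 v ≠ 0 := by simpa using hv
  positivity

lemma normSqV_smul (c : ℂ) (v : Fin M → ℂ) :
    normSqV (c • v) = Complex.normSq c * normSqV v := by
  simp [normSqV, Complex.normSq_mul, Finset.mul_sum]

lemma normSq_star_dotProduct_le (v u : Fin M → ℂ) :
    Complex.normSq (star v ⬝ᵥ u) ≤ normSqV v * normSqV u := by
  have hinner : star v ⬝ᵥ u = inner ℂ (WithLp.toLp 2 v) (WithLp.toLp 2 u) := by
    rw [EuclideanSpace.inner_eq_star_dotProduct, dotProduct_comm]
  rw [hinner, ← Complex.sq_norm, normSqV_eq_norm_sq, normSqV_eq_norm_sq, ← mul_pow]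
  gcongr
  exact norm_inner_le_norm (𝕜 := ℂ) _ _

lemma quadForm_sum {m : ℕ} (R : Fin m → Matrix (Fin M) (Fin M) ℂ) (v : Fin M → ℂ) :
    quadForm (∑ i, R i) v = ∑ i, quadForm (R i) v := by
  simp [quadForm, sum_mulVec, dotProduct_sum, Complex.re_sum]

lemma quadForm_vecMulVec_star (u v : Fin M → ℂ) :
    quadForm (vecMulVec u (star u)) v = Complex.normSq (star v ⬝ᵥ u) := by
  have hconj : star u ⬝ᵥ v = star (star v ⬝ᵥ u) := by rw [star_dotProduct]
  rw [quadForm, vecMulVec_mulVec, dotProduct_smul, op_smul_eq_mul, hconj, Complex.star_def,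
    Complex.mul_conj, Complex.ofReal_re]

lemma re_trace_vecMulVec_star (u : Fin M → ℂ) :
    (vecMulVec u (star u)).trace.re = normSqV u := by
  rw [trace_vecMulVec, dotProduct_comm, dotProduct_star_self_eq_normSqV, Complex.ofReal_re]

lemma Matrix.PosSemidef.quadForm_le_re_trace_mul {R : Matrix (Fin M) (Fin M) ℂ}
    (hR : R.PosSemidef) (v : Fin M → ℂ) : quadForm R v ≤ R.trace.re * normSqV v := by
  obtain ⟨m, u, rfl⟩ := Matrix.posSemidef_iff_eq_sum_vecMulVec.mp hR
  simp only [quadForm_sum, quadForm_vecMulVec_star, trace_sum, Complex.re_sum,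
    re_trace_vecMulVec_star, Finset.sum_mul]
  gcongr with i
  exact (normSq_star_dotProduct_le v (u i)).trans_eq (mul_comm _ _)

end

theorem stmt_1_general {M : ℕ} (h b : Fin M → ℂ) (hb : b ≠ 0)
    (Pt σ γ : ℝ) (hPt : 0 < Pt)
    (hcase : σ ^ 2 * γ ≤ Pt * Complex.normSq (star h ⬝ᵥ b) / normSqV b)
    (w : Fin M → ℂ) (hw : w = fun i => ((Real.sqrt Pt / normV b : ℝ) : ℂ) * b i) :
    Feasible22 Pt σ γ h (vecMulVec w (star w)) 0 ∧
    ((vecMulVec w (star w)).trace).re = Pt ∧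
    quadForm (vecMulVec w (star w)) b = Pt * normSqV b ∧
    ∀ R₁ R', Feasible22 Pt σ γ h R₁ R' → quadForm (R₁ + R') b ≤ Pt * normSqV b := by
  have hbpos : 0 < normSqV b := normSqV_pos hb
  have hscale : Complex.normSq ((Real.sqrt Pt / normV b : ℝ) : ℂ) = Pt / normSqV b := by
    rw [Complex.normSq_ofReal, div_mul_div_comm, Real.mul_self_sqrt hPt.le, normV,
      Real.mul_self_sqrt hbpos.le]
  replace hw : w = ((Real.sqrt Pt / normV b : ℝ) : ℂ) • b := hw
  have hquad (v : Fin M → ℂ) : quadForm (vecMulVec w (star w)) v =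
      Pt / normSqV b * Complex.normSq (star v ⬝ᵥ b) := by
    rw [quadForm_vecMulVec_star, hw, dotProduct_smul, smul_eq_mul, Complex.normSq_mul, hscale]
  have htrace : (vecMulVec w (star w)).trace.re = Pt := by
    rw [re_trace_vecMulVec_star, hw, normSqV_smul, hscale, div_mul_cancel₀ _ hbpos.ne']
  refine ⟨⟨posSemidef_vecMulVec_self_star _, .zero, ?_, by simpa using htrace.le,
    rank_vecMulVec_le _ _, by simp⟩, htrace, ?_, ?_⟩
  · rwa [hquad, ← mul_div_right_comm]
  · rw [hquad, dotProduct_star_self_eq_normSqV, Complex.normSq_ofReal]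
    field_simp
  · rintro R₁ R' ⟨hR₁, hR', -, htr, -, -⟩
    calc quadForm (R₁ + R') b ≤ (R₁ + R').trace.re * normSqV b :=
          (hR₁.add hR').quadForm_le_re_trace_mul b
      _ ≤ Pt * normSqV b := by gcongr

/-- Theorem 1, first case: if `σ²γ̄ ≤ P_t |hᴴb|²/‖b‖²`, then with
`w̄ = √P_t · b/‖b‖` and `R̄₁ = w̄ w̄ᴴ`, the pair `(R̄₁, 0)` is feasible for problem (22),
`tr(R̄₁) = P_t`, its objective value is `bᴴ R̄₁ b = P_t ‖b‖²`, and every feasible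
pair of problem (22) has objective value at most `P_t ‖b‖²`; hence `(R̄₁, 0)` is optimal. -/
theorem stmt_1 {M : ℕ} (hM : 1 ≤ M) (h b : Fin M → ℂ) (hh : h ≠ 0) (hb : b ≠ 0)
    (Pt σ γ : ℝ) (hPt : 0 < Pt) (hσ : 0 < σ) (hγ : 0 ≤ γ)
    (hcase : σ ^ 2 * γ ≤ Pt * Complex.normSq (star h ⬝ᵥ b) / normSqV b)
    (w : Fin M → ℂ) (hw : w = fun i => ((Real.sqrt Pt / normV b : ℝ) : ℂ) * b i) :
    Feasible22 Pt σ γ h (vecMulVec w (star w)) 0 ∧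
    ((vecMulVec w (star w)).trace).re = Pt ∧
    quadForm (vecMulVec w (star w)) b = Pt * normSqV b ∧
    ∀ R₁ R', Feasible22 Pt σ γ h R₁ R' → quadForm (R₁ + R') b ≤ Pt * normSqV b :=
  stmt_1_general h b hb Pt σ γ hPt hcase w hw
end
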